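/- arXiv:2603.10561 — 4 statements merged into one kernel-verified Lean document; each statement's English description precedes it below -/
import Mathlib

section
/- Let p be an odd prime, α ∈ ℚ_p with p-adic continued fraction expansion [0, b_1, b_2, ...] (so |b_i|_p ≥ p for i ≥ 1 and |α - A_n/B_n|_p < |B_n|_p^{-2} for all n ≥ 0). Suppose for some n ≥ 1 the tuple (b_1,...,b_n) is palindromic, so that A_n = B_{n-1}. Then |α² − A_{n-1}/B_n|_p < |b_1|_p / |B_n|_p². -/
/-!
Since `A_n = B_{n-1}`, the identity
`α² - A_{n-1}/B_n = α (α - A_n/B_n) + (A_n/B_n) (α - A_{n-1}/B_{n-1})`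
splits the error into two products. Both convergents are closer to `α` than `|α|`, so
`|A_n/B_n| = |α| = |b_1|⁻¹`, hence `|B_{n-1}| = |B_n| / |b_1|`, and each product is smaller than
`|b_1| / |B_n|²` by the approximation property; the ultrametric inequality finishes.
-/

open Finset

theorem sq_sub_div_eq_mul_add_mul {K : Type*} [Field K] (α a b c : K) (hc : c ≠ 0) :
    α ^ 2 - a / b = α * (α - c / b) + c / b * (α - a / c) := by
  field_simp
  ring

theorem IsUltrametricDist.norm_eq_of_norm_sub_lt {S : Type*} [SeminormedAddGroup S]
    [IsUltrametricDist S] {x y : S} (h : ‖x - y‖ < ‖x‖) : ‖y‖ = ‖x‖ := by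
  have h' : ‖y - x‖ < ‖x‖ := norm_sub_rev y x ▸ h
  rw [← sub_add_cancel y x, IsUltrametricDist.norm_add_eq_max_of_norm_ne_norm h'.ne,
    max_eq_right h'.le]

/-- In the application `a, b, c` are `A_{n-1}, B_n, B_{n-1} = A_n` and `r = ‖b_1‖`. -/
theorem norm_sq_sub_div_lt {K : Type*} [NormedField K] [IsUltrametricDist K] {α a b c : K} {r : ℝ}
    (hr : 1 ≤ r) (hrb : r < ‖b‖ ^ 2) (hc : c ≠ 0) (hα : ‖α‖ = r⁻¹)
    (hcb : ‖α - c / b‖ < (‖b‖ ^ 2)⁻¹) (hac : ‖α - a / c‖ < (‖c‖ ^ 2)⁻¹) :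
    ‖α ^ 2 - a / b‖ < r / ‖b‖ ^ 2 := by
  have hr0 : 0 < r := one_pos.trans_le hr
  have hb : 0 < ‖b‖ := by
    by_contra! h
    nlinarith [norm_nonneg b]
  have hcb_norm : ‖c / b‖ = r⁻¹ :=
    hα ▸ IsUltrametricDist.norm_eq_of_norm_sub_lt (hα ▸ hcb.trans (inv_strictAnti₀ hr0 hrb))
  have hc_norm : ‖c‖ = ‖b‖ * r⁻¹ := by
    rw [norm_div, div_eq_iff hb.ne'] at hcb_norm
    rw [hcb_norm, mul_comm]
  rw [sq_sub_div_eq_mul_add_mul α a b c hc]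
  refine (IsUltrametricDist.norm_add_le_max _ _).trans_lt (max_lt ?_ ?_)
  · calc ‖α * (α - c / b)‖ = r⁻¹ * ‖α - c / b‖ := by rw [norm_mul, hα]
      _ < r⁻¹ * (‖b‖ ^ 2)⁻¹ := by gcongr
      _ ≤ r / ‖b‖ ^ 2 := by
        rw [div_eq_mul_inv]
        gcongr
        exact (inv_le_one_of_one_le₀ hr).trans hr
  · calc ‖c / b * (α - a / c)‖ = r⁻¹ * ‖α - a / c‖ := by rw [norm_mul, hcb_norm]
      _ < r⁻¹ * (‖c‖ ^ 2)⁻¹ := by gcongr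
      _ = r / ‖b‖ ^ 2 := by
        rw [hc_norm]
        field_simp

theorem stmt_4_general (p : ℕ) [Fact p.Prime]
    (α : ℚ_[p]) (b A B : ℤ → ℚ_[p])
    (hb : ∀ i : ℤ, 1 ≤ i → (p : ℝ) ≤ ‖b i‖)
    (hBnorm : ∀ m : ℤ, 1 ≤ m → ‖B m‖ = ∏ j ∈ Finset.Icc (1 : ℤ) m, ‖b j‖)
    (hBne : ∀ m : ℤ, 0 ≤ m → B m ≠ 0)
    (hα : ‖α‖ = ‖b 1‖⁻¹)
    (happrox : ∀ m : ℤ, 0 ≤ m → ‖α - A m / B m‖ < (‖B m‖ ^ 2)⁻¹)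
    (n : ℤ) (hn : 1 ≤ n)
    (hpal : A n = B (n - 1)) :
    ‖α ^ 2 - A (n - 1) / B n‖ < ‖b 1‖ / ‖B n‖ ^ 2 := by
  have hp : (1 : ℝ) < p := Nat.one_lt_cast.2 (Fact.out : p.Prime).one_lt
  have hb1 : 1 < ‖b 1‖ := hp.trans_le (hb 1 le_rfl)
  have hb1_le : ‖b 1‖ ≤ ‖B n‖ := by
    rw [hBnorm n hn, ← prod_singleton (fun j ↦ ‖b j‖) 1]
    exact prod_le_prod_of_subset_of_one_le (by simpa using hn) (by simp)
      fun j hj _ ↦ hp.le.trans (hb j (mem_Icc.1 hj).1)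
  refine norm_sq_sub_div_lt hb1.le (by nlinarith) (hBne (n - 1) (by omega)) hα ?_
    (happrox (n - 1) (by omega))
  rw [← hpal]
  exact happrox n (by omega)

/-- Lemma on α²: if the p-adic continued fraction of α starts with a
palindrome of length n (so that A_n = B_{n-1}), then
|α² − A_{n-1}/B_n|_p < |b_1|_p / |B_n|_p². -/
theorem stmt_4 (p : ℕ) [Fact p.Prime] (hodd : Odd p)
    (α : ℚ_[p]) (b A B : ℤ → ℚ_[p])
    (hb0 : b 0 = 0)
    (hb : ∀ i : ℤ, 1 ≤ i → (p : ℝ) ≤ ‖b i‖)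
    (hAm2 : A (-2) = 0) (hAm1 : A (-1) = 1)
    (hBm2 : B (-2) = 1) (hBm1 : B (-1) = 0)
    (hArec : ∀ i : ℤ, 0 ≤ i → A i = b i * A (i - 1) + A (i - 2))
    (hBrec : ∀ i : ℤ, 0 ≤ i → B i = b i * B (i - 1) + B (i - 2))
    (hdet : ∀ m : ℤ, 0 ≤ m → A m * B (m - 1) - B m * A (m - 1) = (-1) ^ m.toNat)
    (hBnorm : ∀ m : ℤ, 1 ≤ m → ‖B m‖ = ∏ j ∈ Finset.Icc (1 : ℤ) m, ‖b j‖)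
    (hBne : ∀ m : ℤ, 0 ≤ m → B m ≠ 0)
    (hα : ‖α‖ = ‖b 1‖⁻¹)
    (happrox : ∀ m : ℤ, 0 ≤ m → ‖α - A m / B m‖ < (‖B m‖ ^ 2)⁻¹)
    (n : ℤ) (hn : 1 ≤ n)
    (hpal : A n = B (n - 1)) :
    ‖α ^ 2 - A (n - 1) / B n‖ < ‖b 1‖ / ‖B n‖ ^ 2 :=
  stmt_4_general p α b A B hb hBnorm hBne hα happrox n hn hpal
end

section
/- Let p be a prime and α ∈ ℚ_p be algebraic over ℚ of degree n ≥ 2. Then there exists a constant c > 0 (depending only on α) such that for all integers a, b with b ≠ 0, |α − a/b|_p ≥ c / max(|a|, |b|)^n, where |·| is the usual absolute value on ℤ. -/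
/-!
Clearing denominators, `N = b ^ n f(a / b)` is an integer, nonzero because an irreducible `f` of
degree `≥ 2` has no rational root; comparing its `p`-adic and real sizes gives
`1 ≤ ‖N‖_p |N| ≤ ‖f(a / b)‖_p · C max(|a|, |b|) ^ n`. Near `α` the polynomial is Lipschitz, since
`f - f(α) = (X - α) g` with `g` bounded on a compact ball, so `‖f(a / b)‖_p ≤ M ‖α - a / b‖_p`;
far from `α` the inequality is trivial.
-/

open Polynomial Finset Metric

theorem Padic.one_le_norm_intCast_mul_abs {p : ℕ} [Fact p.Prime] {m : ℤ} (hm : m ≠ 0) :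
    1 ≤ ‖(m : ℚ_[p])‖ * |(m : ℝ)| := by
  have hp : (0 : ℝ) < p := by exact_mod_cast (Fact.out : p.Prime).pos
  have hpow_le : (p : ℝ) ^ padicValInt p m ≤ |(m : ℝ)| := by
    rw [← Int.cast_abs]
    exact_mod_cast Int.le_of_dvd (abs_pos.mpr hm) ((padicValInt_dvd m).trans (self_dvd_abs m))
  rw [Padic.norm_eq_zpow_neg_valuation (by exact_mod_cast hm), Padic.valuation_intCast, zpow_neg,
    zpow_natCast, ← div_eq_inv_mul, one_le_div (by positivity)]
  exact hpow_le

theorem Polynomial.abs_eval_scaleRoots_le {R : Type*} [CommRing R] [LinearOrder R]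
    [IsStrictOrderedRing R] (f : R[X]) (a b : R) :
    |(f.scaleRoots b).eval a| ≤
      (∑ i ∈ range (f.natDegree + 1), |f.coeff i|) * max |a| |b| ^ f.natDegree := by
  rw [eval_eq_sum_range, natDegree_scaleRoots, sum_mul]
  refine (abs_sum_le_sum_abs _ _).trans (sum_le_sum fun i hi => ?_)
  have hi : i ≤ f.natDegree := Nat.lt_succ_iff.mp (mem_range.mp hi)
  calc |(f.scaleRoots b).coeff i * a ^ i|
        = |f.coeff i| * (|a| ^ i * |b| ^ (f.natDegree - i)) := by
        rw [coeff_scaleRoots, abs_mul, abs_mul, abs_pow, abs_pow]; ring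
    _ ≤ |f.coeff i| * (max |a| |b| ^ i * max |a| |b| ^ (f.natDegree - i)) := by
        gcongr
        exacts [le_max_left _ _, le_max_right _ _]
    _ = |f.coeff i| * max |a| |b| ^ f.natDegree := by rw [← pow_add, Nat.add_sub_cancel' hi]

theorem Polynomial.intCast_eval_scaleRoots {K : Type*} [Field K] [CharZero K] (f : ℤ[X]) (a : ℤ)
    {b : ℤ} (hb : b ≠ 0) :
    (((f.scaleRoots b).eval a : ℤ) : K) = (b : K) ^ f.natDegree * aeval ((a : K) / b) f := by
  have := scaleRoots_eval₂_mul (p := f) (Int.castRingHom K) ((a : K) / b) b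
  rw [eq_intCast, mul_div_cancel₀ _ (Int.cast_ne_zero.mpr hb)] at this
  rw [aeval_def, algebraMap_int_eq, ← this, ← eval_map, eval_intCast_map, eq_intCast, Int.cast_id]

theorem Polynomial.aeval_ne_zero_of_irreducible_of_one_lt_natDegree {f : ℤ[X]}
    (hf : Irreducible f) (hdeg : 1 < f.natDegree) (q : ℚ) : aeval q f ≠ 0 := by
  have hirr : Irreducible (f.map (Int.castRingHom ℚ)) :=
    (IsPrimitive.Int.irreducible_iff_irreducible_map_cast (hf.isPrimitive (by omega))).mp hf
  refine fun hq => hirr.not_isRoot_of_natDegree_ne_one ?_ (x := q) ?_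
  · rw [natDegree_map_eq_of_injective (RingHom.injective_int _)]
    omega
  · rwa [IsRoot, ← algebraMap_int_eq, eval_map_algebraMap]

theorem Padic.one_le_mul_norm_aeval_div {p : ℕ} [Fact p.Prime] {f : ℤ[X]}
    (hf : ∀ q : ℚ, aeval q f ≠ 0) {a b : ℤ} (hb : b ≠ 0) :
    1 ≤ (∑ i ∈ range (f.natDegree + 1), |(f.coeff i : ℝ)|) *
      ((max |a| |b| : ℤ) : ℝ) ^ f.natDegree * ‖aeval ((a : ℚ_[p]) / b) f‖ := by
  set N := (f.scaleRoots b).eval a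
  have hN : N ≠ 0 := fun h => by
    have : ((N : ℤ) : ℚ) = (b : ℚ) ^ f.natDegree * aeval ((a : ℚ) / b) f :=
      intCast_eval_scaleRoots f a hb
    rw [h, Int.cast_zero, eq_comm, mul_eq_zero] at this
    exact this.elim (pow_ne_zero _ (Int.cast_ne_zero.mpr hb)) (hf _)
  have hN_padic : ‖(N : ℚ_[p])‖ ≤ ‖aeval ((a : ℚ_[p]) / b) f‖ := by
    rw [show ((N : ℤ) : ℚ_[p]) = _ from intCast_eval_scaleRoots f a hb, norm_mul, norm_pow]
    exact mul_le_of_le_one_left (norm_nonneg _) (pow_le_one₀ (norm_nonneg _) (norm_int_le_one b))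
  have hN_abs : |(N : ℝ)| ≤ (∑ i ∈ range (f.natDegree + 1), |(f.coeff i : ℝ)|) *
      ((max |a| |b| : ℤ) : ℝ) ^ f.natDegree := by exact_mod_cast abs_eval_scaleRoots_le f a b
  calc 1 ≤ ‖(N : ℚ_[p])‖ * |(N : ℝ)| := one_le_norm_intCast_mul_abs hN
    _ ≤ _ := by rw [mul_comm]; gcongr

theorem Polynomial.exists_dist_eval_le_mul_dist {K : Type*} [NormedField K] [ProperSpace K]
    (f : K[X]) (x : K) (ε : ℝ) :
    ∃ M, ∀ y ∈ closedBall x ε, dist (f.eval x) (f.eval y) ≤ dist x y * M := by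
  set g := f - C (f.eval x)
  have hg : (X - C x) * (g /ₘ (X - C x)) = g := mul_divByMonic_eq_iff_isRoot.mpr (by simp [g])
  obtain ⟨M, hM⟩ := (isCompact_closedBall x ε).exists_bound_of_continuousOn
    (g /ₘ (X - C x)).continuous.continuousOn
  refine ⟨M, fun y hy => ?_⟩
  have hy' : f.eval y - f.eval x = (y - x) * (g /ₘ (X - C x)).eval y := by
    simpa [g] using congr_arg (eval y) hg.symm
  rw [dist_comm, dist_eq_norm, hy', norm_mul, ← dist_eq_norm, dist_comm]
  exact mul_le_mul_of_nonneg_left (hM y hy) dist_nonneg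

/-- p-adic Liouville inequality: if α ∈ ℚ_p is algebraic of degree
n ≥ 2 over ℚ, then there is c > 0 with |α − a/b|_p ≥ c / max(|a|,|b|)^n for all
integers a, b with b ≠ 0. -/
theorem stmt_6 (p : ℕ) [Fact p.Prime] (α : ℚ_[p]) (n : ℕ) (hn : 2 ≤ n)
    (f : Polynomial ℤ) (hf_irr : Irreducible f) (hf_deg : f.natDegree = n)
    (hf_root : Polynomial.aeval α f = 0) :
    ∃ c : ℝ, 0 < c ∧ ∀ a b : ℤ, b ≠ 0 →
      c / ((max |a| |b| : ℤ) : ℝ) ^ n ≤ ‖α - (a : ℚ_[p]) / (b : ℚ_[p])‖ := by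
  subst hf_deg
  -- `Liouville.exists_one_le_pow_mul_dist` wants weights `≥ 1`, hence the `max 1`; the rationals
  -- are indexed by pairs `(a, b)`, so its index `Z` of numerators is trivial.
  set H : ℝ := max 1 (∑ i ∈ range (f.natDegree + 1), |(f.coeff i : ℝ)|)
  have hd (x : {x : ℤ × ℤ // x.2 ≠ 0}) : 1 ≤ H * ((max |x.1.1| |x.1.2| : ℤ) : ℝ) ^ f.natDegree :=
    one_le_mul_of_one_le_of_one_le (le_max_left _ _)
      (one_le_pow₀ (by exact_mod_cast (Int.one_le_abs x.2).trans (le_max_right _ _)))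
  have hL (x : {x : ℤ × ℤ // x.2 ≠ 0}) : 1 ≤ H * ((max |x.1.1| |x.1.2| : ℤ) : ℝ) ^ f.natDegree *
      dist (aeval α f) (aeval ((x.1.1 : ℚ_[p]) / x.1.2) f) := by
    rw [hf_root, dist_zero_left]
    refine (Padic.one_le_mul_norm_aeval_div (p := p) (a := x.1.1)
      (aeval_ne_zero_of_irreducible_of_one_lt_natDegree hf_irr hn) x.2).trans ?_
    gcongr
    exact le_max_right _ _
  obtain ⟨M, hM⟩ := (f.map (algebraMap ℤ ℚ_[p])).exists_dist_eval_le_mul_dist α 1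
  simp only [eval_map_algebraMap] at hM
  obtain ⟨A, hA, hA_le⟩ := Liouville.exists_one_le_pow_mul_dist (Z := Unit) hd one_pos hM
    (fun _ x _ => hL x)
  refine ⟨1 / (H * A), by positivity, fun a b hb => ?_⟩
  rw [div_div, div_le_iff₀ (by positivity), ← dist_eq_norm]
  linarith [hA_le () ⟨(a, b), hb⟩]
end

section
/- Let p be a prime and α ∈ ℚ_p. Suppose A_1/B_1, A_2/B_2 are fractions in lowest terms with A_i, B_i ∈ ℤ, B_i > 0, |B_2| > |B_1| ≥ 1, A_1/B_1 ≠ A_2/B_2, |B_i| ≥ |A_i|, and both satisfy |α − A_i/B_i|_p < 1/(2|B_i|^{2+ε}) for some ε > 0. Then |B_2| > |B_1|^{1+ε}. -/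
/-!
Cross-multiplying, `A₁/B₁ - A₂/B₂ = D/(B₁B₂)` with `D = A₁B₂ - B₁A₂` a nonzero integer of size at
most `2|B₁||B₂|`. A nonzero integer `m` has `|m|_p ≥ 1/|m|`, and `|B₁B₂|_p ≤ 1`, so the two
approximations are at least `1/(2|B₁||B₂|)` apart p-adically. By the ultrametric inequality they
are also less than `1/(2|B₁|^{2+ε})` apart, and comparing the two bounds gives `|B₁|^{1+ε} < |B₂|`.
-/

theorem abs_mul_sub_mul_le_two_mul_abs_mul {R : Type*} [CommRing R] [LinearOrder R]
    [IsStrictOrderedRing R] {a₁ a₂ b₁ b₂ : R} (ha₁ : |a₁| ≤ |b₁|) (ha₂ : |a₂| ≤ |b₂|) :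
    |a₁ * b₂ - b₁ * a₂| ≤ 2 * |b₁| * |b₂| :=
  calc |a₁ * b₂ - b₁ * a₂| ≤ |a₁| * |b₂| + |b₁| * |a₂| := by
        simpa only [abs_mul] using abs_sub (a₁ * b₂) (b₁ * a₂)
    _ ≤ |b₁| * |b₂| + |b₁| * |b₂| := by gcongr
    _ = 2 * |b₁| * |b₂| := by ring

theorem lt_of_inv_two_mul_mul_lt_inv_two_mul_rpow {x y ε : ℝ} (hx : 0 < x) (hy : 0 < y)
    (h : (2 * x * y)⁻¹ < (2 * x ^ (2 + ε))⁻¹) : x ^ (1 + ε) < y := by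
  have hpos : 0 < 2 * x ^ (2 + ε) := by positivity
  have hlt : 2 * x ^ (2 + ε) < 2 * x * y := (inv_lt_inv₀ (by positivity) hpos).1 h
  rw [show (2 : ℝ) + ε = 1 + (1 + ε) by ring, Real.rpow_add hx, Real.rpow_one] at hlt
  nlinarith

namespace Padic

variable {p : ℕ} [Fact p.Prime]

theorem inv_abs_le_norm_intCast {m : ℤ} (hm : m ≠ 0) : |(m : ℝ)|⁻¹ ≤ ‖(m : ℚ_[p])‖ := by
  rw [norm_eq_zpow_neg_valuation (by exact_mod_cast hm), valuation_intCast, zpow_neg,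
    zpow_natCast]
  have hdvd : (p : ℤ) ^ padicValInt p m ≤ |m| :=
    Int.le_of_dvd (abs_pos.2 hm) ((dvd_abs _ _).2 (padicValInt_dvd m))
  have hp : (0 : ℝ) < p := by exact_mod_cast (Fact.out : p.Prime).pos
  exact inv_anti₀ (pow_pos hp _) (by exact_mod_cast hdvd)

theorem norm_intCast_le_norm_intCast_div (m : ℤ) {n : ℤ} (hn : n ≠ 0) :
    ‖(m : ℚ_[p])‖ ≤ ‖(m : ℚ_[p]) / n‖ := by
  rw [norm_div]
  exact le_div_self (norm_nonneg _) (norm_pos_iff.2 (by exact_mod_cast hn)) (norm_int_le_one n)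

theorem inv_two_mul_abs_mul_le_norm_div_sub_div {A₁ A₂ B₁ B₂ : ℤ} (hB₁ : B₁ ≠ 0) (hB₂ : B₂ ≠ 0)
    (hA₁ : |A₁| ≤ |B₁|) (hA₂ : |A₂| ≤ |B₂|) (hne : (A₁ : ℚ_[p]) / B₁ ≠ (A₂ : ℚ_[p]) / B₂) :
    (2 * |(B₁ : ℝ)| * |(B₂ : ℝ)|)⁻¹ ≤ ‖(A₁ : ℚ_[p]) / B₁ - (A₂ : ℚ_[p]) / B₂‖ := by
  have hB₁' : (B₁ : ℚ_[p]) ≠ 0 := by exact_mod_cast hB₁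
  have hB₂' : (B₂ : ℚ_[p]) ≠ 0 := by exact_mod_cast hB₂
  set D : ℤ := A₁ * B₂ - B₁ * A₂
  have hdiff : (A₁ : ℚ_[p]) / B₁ - (A₂ : ℚ_[p]) / B₂ = (D : ℚ_[p]) / ((B₁ * B₂ : ℤ) : ℚ_[p]) := by
    rw [div_sub_div _ _ hB₁' hB₂']
    push_cast [D]
    rfl
  have hD : D ≠ 0 := fun h ↦ hne (sub_eq_zero.1 (by rw [hdiff, h, Int.cast_zero, zero_div]))
  have hDle : |(D : ℝ)| ≤ 2 * |(B₁ : ℝ)| * |(B₂ : ℝ)| := by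
    exact_mod_cast abs_mul_sub_mul_le_two_mul_abs_mul hA₁ hA₂
  calc (2 * |(B₁ : ℝ)| * |(B₂ : ℝ)|)⁻¹ ≤ |(D : ℝ)|⁻¹ := inv_anti₀ (by positivity) hDle
    _ ≤ ‖(D : ℚ_[p])‖ := inv_abs_le_norm_intCast hD
    _ ≤ _ := hdiff ▸ norm_intCast_le_norm_intCast_div D (mul_ne_zero hB₁ hB₂)

end Padic

theorem stmt_7_general (p : ℕ) [Fact p.Prime] (α : ℚ_[p]) (ε : ℝ) (hε : 0 < ε)
    (A₁ A₂ B₁ B₂ : ℤ)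
    (hB : |B₁| < |B₂|) (hB₁ : 1 ≤ |B₁|)
    (hne : (A₁ : ℚ_[p]) / (B₁ : ℚ_[p]) ≠ (A₂ : ℚ_[p]) / (B₂ : ℚ_[p]))
    (hAB₁ : |A₁| ≤ |B₁|) (hAB₂ : |A₂| ≤ |B₂|)
    (h₁ : ‖α - (A₁ : ℚ_[p]) / (B₁ : ℚ_[p])‖ < 1 / (2 * (|B₁| : ℝ) ^ ((2 : ℝ) + ε)))
    (h₂ : ‖α - (A₂ : ℚ_[p]) / (B₂ : ℚ_[p])‖ < 1 / (2 * (|B₂| : ℝ) ^ ((2 : ℝ) + ε))) :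
    ((|B₁| : ℝ)) ^ ((1 : ℝ) + ε) < (|B₂| : ℝ) := by
  have hB₁pos : 0 < |B₁| := one_pos.trans_le hB₁
  have hb₁ : (0 : ℝ) < |(B₁ : ℝ)| := by exact_mod_cast hB₁pos
  have hb : |(B₁ : ℝ)| ≤ |(B₂ : ℝ)| := by exact_mod_cast hB.le
  have hfar := Padic.inv_two_mul_abs_mul_le_norm_div_sub_div (abs_pos.1 hB₁pos)
    (abs_pos.1 (hB₁pos.trans hB)) hAB₁ hAB₂ hne
  have hclose : ‖(A₁ : ℚ_[p]) / B₁ - (A₂ : ℚ_[p]) / B₂‖ < (2 * |(B₁ : ℝ)| ^ (2 + ε))⁻¹ := by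
    rw [← dist_eq_norm, ← one_div]
    refine (dist_triangle_max _ α _).trans_lt (max_lt ?_ ?_)
    · rwa [dist_comm, dist_eq_norm]
    · rw [dist_eq_norm]
      refine h₂.trans_le (one_div_le_one_div_of_le (by positivity) ?_)
      gcongr
  exact lt_of_inv_two_mul_mul_lt_inv_two_mul_rpow hb₁ (hb₁.trans_le hb) (hfar.trans_lt hclose)

/-- gap principle: two distinct good rational approximations in
lowest terms to α ∈ ℚ_p with |B_i| ≥ |A_i| and denominators |B_2| > |B_1| ≥ 1
satisfy |B_2| > |B_1|^{1+ε}. -/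
theorem stmt_7 (p : ℕ) [Fact p.Prime] (α : ℚ_[p]) (ε : ℝ) (hε : 0 < ε)
    (A₁ A₂ B₁ B₂ : ℤ)
    (hB₁pos : 0 < B₁) (hB₂pos : 0 < B₂)
    (hgcd₁ : Int.gcd A₁ B₁ = 1) (hgcd₂ : Int.gcd A₂ B₂ = 1)
    (hB : |B₁| < |B₂|) (hB₁ : 1 ≤ |B₁|)
    (hne : (A₁ : ℚ_[p]) / (B₁ : ℚ_[p]) ≠ (A₂ : ℚ_[p]) / (B₂ : ℚ_[p]))
    (hAB₁ : |A₁| ≤ |B₁|) (hAB₂ : |A₂| ≤ |B₂|)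
    (h₁ : ‖α - (A₁ : ℚ_[p]) / (B₁ : ℚ_[p])‖ < 1 / (2 * (|B₁| : ℝ) ^ ((2 : ℝ) + ε)))
    (h₂ : ‖α - (A₂ : ℚ_[p]) / (B₂ : ℚ_[p])‖ < 1 / (2 * (|B₂| : ℝ) ^ ((2 : ℝ) + ε))) :
    ((|B₁| : ℝ)) ^ ((1 : ℝ) + ε) < (|B₂| : ℝ) :=
  stmt_7_general p α ε hε A₁ A₂ B₁ B₂ hB hB₁ hne hAB₁ hAB₂ h₁ h₂
end

section
/- Let p be an odd prime, α ∈ ℚ_p, and let [0, b_1, b_2, ...] be its p-adic continued fraction with convergents A_i/B_i. If β ∈ ℚ_p has a p-adic continued fraction expansion whose first i+1 partial quotients coincide with those of α, then |α − β|_p < 1/|B_i|_p². -/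
/-!
The common partial quotients make α and β values of the same Möbius map
g ↦ (g A_i + A_{i-1}) / (g B_i + B_{i-1}) at the complete quotients γ, γ', so
α - β = (γ - γ') (A_i B_{i-1} - A_{i-1} B_i) / ((γ B_i + B_{i-1}) (γ' B_i + B_{i-1})).
The determinant is ±1, and since |B_j|_p grows strictly with j the denominators have
norms |γ| |B_i| and |γ'| |B_i|. The ultrametric inequality gives
|γ - γ'| ≤ max(|γ|, |γ'|) < |γ| |γ'|, which is the claimed strict bound.
-/

section Continuants

variable {K : Type*}

theorem continuant_det_eq_neg_one_zpow [Field K] {b A B : ℤ → K}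
    (hAm1 : A (-1) = 1) (hBm2 : B (-2) = 1) (hBm1 : B (-1) = 0)
    (hArec : ∀ j : ℤ, 0 ≤ j → A j = b j * A (j - 1) + A (j - 2))
    (hBrec : ∀ j : ℤ, 0 ≤ j → B j = b j * B (j - 1) + B (j - 2))
    {j : ℤ} (hj : -1 ≤ j) : A j * B (j - 1) - A (j - 1) * B j = (-1) ^ (j + 1) := by
  induction j, hj using Int.leInduction with
  | base => norm_num [hAm1, hBm2, hBm1]
  | succ j hj ih =>
    have hA := hArec (j + 1) (by omega)
    have hB := hBrec (j + 1) (by omega)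
    rw [show j + 1 - 1 = j by ring, show j + 1 - 2 = j - 1 by ring] at hA hB
    rw [show j + 1 - 1 = j by ring, hA, hB, zpow_add_one₀ (by norm_num), ← ih]
    ring

variable [NormedField K] [IsUltrametricDist K]

theorem norm_add_eq_left_of_norm_lt {x y : K} (h : ‖y‖ < ‖x‖) : ‖x + y‖ = ‖x‖ := by
  rw [IsUltrametricDist.norm_add_eq_max_of_norm_ne_norm h.ne', max_eq_left h.le]

theorem norm_continuant_pred_lt {b B : ℤ → K} (hb : ∀ j : ℤ, 1 ≤ j → 1 < ‖b j‖)
    (hBm2 : B (-2) = 1) (hBm1 : B (-1) = 0)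
    (hBrec : ∀ j : ℤ, 0 ≤ j → B j = b j * B (j - 1) + B (j - 2))
    {j : ℤ} (hj : 0 ≤ j) : ‖B (j - 1)‖ < ‖B j‖ := by
  induction j, hj using Int.leInduction with
  | base => simp [hBrec 0 le_rfl, hBm2, hBm1]
  | succ j hj ih =>
    have hBj : ‖B j‖ < ‖b (j + 1) * B j‖ := by
      rw [norm_mul]
      exact lt_mul_left ((norm_nonneg _).trans_lt ih) (hb _ (by omega))
    rw [hBrec (j + 1) (by omega), show j + 1 - 1 = j by ring, show j + 1 - 2 = j - 1 by ring,
      norm_add_eq_left_of_norm_lt (ih.trans hBj)]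
    exact hBj

theorem norm_mul_add_eq_of_norm_lt {g x y : K} (hg : 1 ≤ ‖g‖) (h : ‖y‖ < ‖x‖) :
    ‖g * x + y‖ = ‖g‖ * ‖x‖ := by
  have hy : ‖y‖ < ‖g * x‖ :=
    norm_mul g x ▸ h.trans_le (le_mul_of_one_le_left (norm_nonneg x) hg)
  rw [norm_add_eq_left_of_norm_lt hy, norm_mul]

theorem norm_sub_lt_mul_norm {x y : K} (hx : 1 < ‖x‖) (hy : 1 < ‖y‖) :
    ‖x - y‖ < ‖x‖ * ‖y‖ :=
  calc ‖x - y‖ ≤ max ‖x‖ ‖y‖ := by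
        simpa [sub_eq_add_neg] using IsUltrametricDist.norm_add_le_max x (-y)
    _ < ‖x‖ * ‖y‖ := max_lt (lt_mul_right (by linarith) hy) (lt_mul_left (by linarith) hx)

end Continuants

theorem linearFrac_sub_linearFrac {K : Type*} [Field K] {a a' c c' x y : K}
    (hx : x * c + c' ≠ 0) (hy : y * c + c' ≠ 0) :
    (x * a + a') / (x * c + c') - (y * a + a') / (y * c + c') =
      (x - y) * (a * c' - a' * c) / ((x * c + c') * (y * c + c')) := by
  rw [div_sub_div _ _ hx hy]
  ring

theorem stmt_9_general (p : ℕ) [Fact p.Prime]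
    (α β : ℚ_[p]) (b A B : ℤ → ℚ_[p])
    (hb : ∀ j : ℤ, 1 ≤ j → (p : ℝ) ≤ ‖b j‖)
    (hAm1 : A (-1) = 1)
    (hBm2 : B (-2) = 1) (hBm1 : B (-1) = 0)
    (hArec : ∀ j : ℤ, 0 ≤ j → A j = b j * A (j - 1) + A (j - 2))
    (hBrec : ∀ j : ℤ, 0 ≤ j → B j = b j * B (j - 1) + B (j - 2))
    (i : ℤ) (hi : 0 ≤ i)
    (γ γ' : ℚ_[p]) (hγ : (p : ℝ) ≤ ‖γ‖) (hγ' : (p : ℝ) ≤ ‖γ'‖)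
    (hα : α = (γ * A i + A (i - 1)) / (γ * B i + B (i - 1)))
    (hβ : β = (γ' * A i + A (i - 1)) / (γ' * B i + B (i - 1))) :
    ‖α - β‖ < (‖B i‖ ^ 2)⁻¹ := by
  have hp : (1 : ℝ) < p := by exact_mod_cast (Fact.out : p.Prime).one_lt
  have hγ1 : 1 < ‖γ‖ := hp.trans_le hγ
  have hγ'1 : 1 < ‖γ'‖ := hp.trans_le hγ'
  have hB := norm_continuant_pred_lt (fun j hj => hp.trans_le (hb j hj)) hBm2 hBm1 hBrec hi
  have hBi : 0 < ‖B i‖ := (norm_nonneg _).trans_lt hB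
  have hd := norm_mul_add_eq_of_norm_lt hγ1.le hB
  have hd' := norm_mul_add_eq_of_norm_lt hγ'1.le hB
  have hdet : ‖A i * B (i - 1) - A (i - 1) * B i‖ = 1 := by
    rw [continuant_det_eq_neg_one_zpow hAm1 hBm2 hBm1 hArec hBrec (by omega)]
    simp
  have hd0 : γ * B i + B (i - 1) ≠ 0 := norm_ne_zero_iff.mp (by rw [hd]; positivity)
  have hd'0 : γ' * B i + B (i - 1) ≠ 0 := norm_ne_zero_iff.mp (by rw [hd']; positivity)
  rw [hα, hβ, linearFrac_sub_linearFrac hd0 hd'0, norm_div, norm_mul, norm_mul, hdet, hd, hd',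
    mul_one, div_lt_iff₀ (by positivity)]
  calc ‖γ - γ'‖ < ‖γ‖ * ‖γ'‖ := norm_sub_lt_mul_norm hγ1 hγ'1
    _ = (‖B i‖ ^ 2)⁻¹ * (‖γ‖ * ‖B i‖ * (‖γ'‖ * ‖B i‖)) := by field_simp

/-- if β has a p-adic continued fraction expansion whose first i+1
partial quotients coincide with those of α = [0, b_1, b_2, ...], then
|α − β|_p < 1/|B_i|_p².  The common beginning is expressed through the complete
quotients γ, γ' (with |γ|_p, |γ'|_p ≥ p) via the standard formula
α = (γ A_i + A_{i-1})/(γ B_i + B_{i-1}) and similarly for β. -/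
theorem stmt_9 (p : ℕ) [Fact p.Prime] (hodd : Odd p)
    (α β : ℚ_[p]) (b A B : ℤ → ℚ_[p])
    (hb0 : b 0 = 0)
    (hb : ∀ j : ℤ, 1 ≤ j → (p : ℝ) ≤ ‖b j‖)
    (hAm2 : A (-2) = 0) (hAm1 : A (-1) = 1)
    (hBm2 : B (-2) = 1) (hBm1 : B (-1) = 0)
    (hArec : ∀ j : ℤ, 0 ≤ j → A j = b j * A (j - 1) + A (j - 2))
    (hBrec : ∀ j : ℤ, 0 ≤ j → B j = b j * B (j - 1) + B (j - 2))
    (i : ℤ) (hi : 0 ≤ i)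
    (γ γ' : ℚ_[p]) (hγ : (p : ℝ) ≤ ‖γ‖) (hγ' : (p : ℝ) ≤ ‖γ'‖)
    (hα : α = (γ * A i + A (i - 1)) / (γ * B i + B (i - 1)))
    (hβ : β = (γ' * A i + A (i - 1)) / (γ' * B i + B (i - 1))) :
    ‖α - β‖ < (‖B i‖ ^ 2)⁻¹ :=
  stmt_9_general p α β b A B hb hAm1 hBm2 hBm1 hArec hBrec i hi γ γ' hγ hγ' hα hβ
end
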